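/- arXiv:1305.0480 — 6 statements merged into one kernel-verified Lean document; each statement's English description precedes it below -/
import Mathlib

section
/- Let G be a second countable locally compact group, let μ be a Borel measure on G which is finite on compact subsets, and let π be a strongly continuous unitary representation of G on a complex Hilbert space H. Then the following are equivalent: (i) there exists C > 0 such that for all unit vectors ξ, η ∈ H one has ∫_G |⟨π(g)ξ, η⟩|² dμ(g) ≤ C; (ii) for all vectors ξ, η ∈ H one has ∫_G |⟨π(g)ξ, η⟩|² dμ(g) < ∞. -/
/-!
(ii) ⇒ (i) is a uniform boundedness argument. For fixed `η`, the map
`ξ ↦ ∫ |⟨π(g)ξ, η⟩|² dμ` is finite, lower semicontinuous (Fatou) and behaves like the square of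
a seminorm, so by Baire's theorem it is bounded on some ball, hence on the unit ball. The same
argument applied to `η ↦ sup_{‖ξ‖ ≤ 1} ∫ |⟨π(g)ξ, η⟩|² dμ` gives a joint bound.
(i) ⇒ (ii) is homogeneity of degree two in each variable.
-/

open MeasureTheory
open scoped ENNReal InnerProductSpace

theorem lowerSemicontinuous_lintegral {X α : Type*} [TopologicalSpace X]
    [FirstCountableTopology X] [MeasurableSpace α] {μ : Measure α} {F : X → α → ℝ≥0∞}
    (hF : ∀ a, LowerSemicontinuous (F · a)) (hmeas : ∀ x, AEMeasurable (F x) μ) :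
    LowerSemicontinuous fun x => ∫⁻ a, F x a ∂μ :=
  lowerSemicontinuous_iff_le_liminf.2 fun x =>
    (lintegral_mono fun a => (hF a).le_liminf x).trans (lintegral_liminf_le' hmeas)

theorem enorm_sub_sq_le {E : Type*} [SeminormedAddCommGroup E] (a b : E) :
    ‖a - b‖ₑ ^ 2 ≤ 2 * (‖a‖ₑ ^ 2 + ‖b‖ₑ ^ 2) := by
  simp only [enorm]
  exact_mod_cast (pow_le_pow_left₀ zero_le (nnnorm_sub_le a b) 2).trans add_sq_le

theorem lintegral_enorm_sub_sq_le {α E : Type*} [MeasurableSpace α] {μ : Measure α}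
    [SeminormedAddCommGroup E] {f : α → E} (hf : AEMeasurable (fun a => ‖f a‖ₑ ^ 2) μ)
    (g : α → E) :
    ∫⁻ a, ‖f a - g a‖ₑ ^ 2 ∂μ ≤ 2 * (∫⁻ a, ‖f a‖ₑ ^ 2 ∂μ + ∫⁻ a, ‖g a‖ₑ ^ 2 ∂μ) :=
  calc ∫⁻ a, ‖f a - g a‖ₑ ^ 2 ∂μ ≤ ∫⁻ a, 2 * (‖f a‖ₑ ^ 2 + ‖g a‖ₑ ^ 2) ∂μ :=
        lintegral_mono fun a => enorm_sub_sq_le (f a) (g a)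
    _ = _ := by rw [lintegral_const_mul' _ _ ENNReal.ofNat_ne_top, lintegral_add_left' hf]

theorem lintegral_enorm_mul_sq {α 𝕜 : Type*} [MeasurableSpace α] {μ : Measure α}
    [NormedRing 𝕜] [NormMulClass 𝕜] (c : 𝕜) (f : α → 𝕜) :
    ∫⁻ a, ‖c * f a‖ₑ ^ 2 ∂μ = ‖c‖ₑ ^ 2 * ∫⁻ a, ‖f a‖ₑ ^ 2 ∂μ := by
  simp only [enorm_mul, mul_pow]
  exact lintegral_const_mul' _ _ (by finiteness)

section Baire

variable {𝕜 E F : Type*} [RCLike 𝕜] [NormedAddCommGroup E] [NormedSpace 𝕜 E]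
  [NormedAddCommGroup F] [NormedSpace 𝕜 F]

theorem le_enorm_sq_mul_of_forall_norm_eq_one {p : E → ℝ≥0∞}
    (hsmul : ∀ (c : 𝕜) x, p (c • x) ≤ ‖c‖ₑ ^ 2 * p x) {C : ℝ≥0∞}
    (hC : ∀ x, ‖x‖ = 1 → p x ≤ C) (x : E) : p x ≤ ‖x‖ₑ ^ 2 * C := by
  rcases eq_or_ne x 0 with rfl | hx
  · simpa using hsmul (0 : 𝕜) 0
  calc p x = p ((‖x‖ : 𝕜) • (‖x‖⁻¹ : 𝕜) • x) := by
        rw [smul_smul, mul_inv_cancel₀ (by simpa using hx), one_smul]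
    _ ≤ ‖x‖ₑ ^ 2 * C := by
        refine (hsmul _ _).trans ?_
        rw [← ofReal_norm, RCLike.norm_ofReal, abs_norm, ofReal_norm]
        gcongr
        exact hC _ (norm_smul_inv_norm hx)

variable [CompleteSpace E] [CompleteSpace F]

theorem exists_bound_of_lowerSemicontinuous {p : E → ℝ≥0∞} (hlsc : LowerSemicontinuous p)
    (hfin : ∀ x, p x ≠ ∞) (hsub : ∀ x y, p (x - y) ≤ 2 * (p x + p y))
    (hsmul : ∀ (c : 𝕜) x, p (c • x) ≤ ‖c‖ₑ ^ 2 * p x) :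
    ∃ C < ∞, ∀ x, ‖x‖ ≤ 1 → p x ≤ C := by
  obtain ⟨n, x₀, hx₀⟩ := nonempty_interior_of_iUnion_of_closed
    (fun n : ℕ => hlsc.isClosed_preimage n)
    (Set.iUnion_eq_univ_iff.2 fun x => (ENNReal.exists_nat_gt (hfin x)).imp fun _ => le_of_lt)
  obtain ⟨r, hr, hball⟩ := Metric.mem_nhds_iff.1 (mem_interior_iff_mem_nhds.1 hx₀)
  set c : 𝕜 := ((r / 2 : ℝ) : 𝕜)
  have hc : c ≠ 0 := by simp [c, hr.ne']
  refine ⟨‖c⁻¹‖ₑ ^ 2 * (2 * (n + n)), by finiteness, fun x hx => ?_⟩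
  have hshift : x₀ + c • x ∈ Metric.ball x₀ r := by
    rw [Metric.mem_ball, dist_eq_norm, add_sub_cancel_left, norm_smul]
    simp only [c, RCLike.norm_ofReal, abs_of_pos (half_pos hr)]
    nlinarith [norm_nonneg x]
  have hcx : p (c • x) ≤ 2 * (n + n) := by
    simpa using (hsub (x₀ + c • x) x₀).trans
      (by gcongr <;> [exact hball hshift; exact hball (Metric.mem_ball_self hr)])
  calc p x = p (c⁻¹ • c • x) := by rw [inv_smul_smul₀ hc]
    _ ≤ _ := (hsmul _ _).trans (by gcongr)

theorem exists_bound_of_separately_lowerSemicontinuous {q : E → F → ℝ≥0∞}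
    (hfin : ∀ x y, q x y ≠ ∞)
    (hlsc_left : ∀ y, LowerSemicontinuous (q · y)) (hlsc_right : ∀ x, LowerSemicontinuous (q x))
    (hsub_left : ∀ x x' y, q (x - x') y ≤ 2 * (q x y + q x' y))
    (hsub_right : ∀ x y y', q x (y - y') ≤ 2 * (q x y + q x y'))
    (hsmul_left : ∀ (c : 𝕜) x y, q (c • x) y ≤ ‖c‖ₑ ^ 2 * q x y)
    (hsmul_right : ∀ (c : 𝕜) x y, q x (c • y) ≤ ‖c‖ₑ ^ 2 * q x y) :
    ∃ C < ∞, ∀ x y, ‖x‖ ≤ 1 → ‖y‖ ≤ 1 → q x y ≤ C := by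
  set P : F → ℝ≥0∞ := fun y => ⨆ (x) (_ : ‖x‖ ≤ 1), q x y
  have hP : ∀ y, P y ≠ ∞ := fun y => by
    obtain ⟨C, hC, hbound⟩ := exists_bound_of_lowerSemicontinuous (hlsc_left y) (hfin · y)
      (hsub_left · · y) (hsmul_left · · y)
    exact (iSup₂_le hbound).trans_lt hC |>.ne
  obtain ⟨C, hC, hbound⟩ := exists_bound_of_lowerSemicontinuous (𝕜 := 𝕜)
    (lowerSemicontinuous_biSup fun x _ => hlsc_right x) hP
    (fun y y' => iSup₂_le fun x hx => (hsub_right x y y').trans <| by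
      gcongr <;> exact le_iSup₂ (f := fun x (_ : ‖x‖ ≤ 1) => q x _) x hx)
    (fun c y => iSup₂_le fun x hx => (hsmul_right c x y).trans <| by
      gcongr; exact le_iSup₂ (f := fun x (_ : ‖x‖ ≤ 1) => q x _) x hx)
  exact ⟨C, hC, fun x y hx hy => (le_iSup₂ (f := fun x (_ : ‖x‖ ≤ 1) => q x y) x hx).trans
    (hbound y hy)⟩

end Baire

section MatrixCoefficient

variable {G H : Type*} [Monoid G] [MeasurableSpace G] (μ : Measure G)
  [NormedAddCommGroup H] [InnerProductSpace ℂ H] (π : G →* (H ≃ₗᵢ[ℂ] H))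

noncomputable def lintegralMatrixCoeffSq (ξ η : H) : ℝ≥0∞ :=
  ∫⁻ g, ‖⟪π g ξ, η⟫_ℂ‖ₑ ^ 2 ∂μ

theorem lintegralMatrixCoeffSq_smul_left (c : ℂ) (ξ η : H) :
    lintegralMatrixCoeffSq μ π (c • ξ) η = ‖c‖ₑ ^ 2 * lintegralMatrixCoeffSq μ π ξ η := by
  simp only [lintegralMatrixCoeffSq, map_smul, inner_smul_left]
  rw [lintegral_enorm_mul_sq, RCLike.enorm_conj]

theorem lintegralMatrixCoeffSq_smul_right (c : ℂ) (ξ η : H) :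
    lintegralMatrixCoeffSq μ π ξ (c • η) = ‖c‖ₑ ^ 2 * lintegralMatrixCoeffSq μ π ξ η := by
  simp only [lintegralMatrixCoeffSq, inner_smul_right]
  exact lintegral_enorm_mul_sq c _

variable [TopologicalSpace G] [OpensMeasurableSpace G] {π}
  (hπ : ∀ ξ : H, Continuous fun g => π g ξ)
include hπ

theorem aemeasurable_enorm_matrixCoeff_sq (ξ η : H) :
    AEMeasurable (fun g => ‖⟪π g ξ, η⟫_ℂ‖ₑ ^ 2) μ :=
  (ENNReal.continuous_pow 2).comp ((hπ ξ).inner continuous_const).enorm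
    |>.measurable.aemeasurable

theorem lintegralMatrixCoeffSq_sub_left_le (ξ ξ' η : H) :
    lintegralMatrixCoeffSq μ π (ξ - ξ') η ≤
      2 * (lintegralMatrixCoeffSq μ π ξ η + lintegralMatrixCoeffSq μ π ξ' η) := by
  simp only [lintegralMatrixCoeffSq, map_sub, inner_sub_left]
  exact lintegral_enorm_sub_sq_le (aemeasurable_enorm_matrixCoeff_sq μ hπ ξ η) _

theorem lintegralMatrixCoeffSq_sub_right_le (ξ η η' : H) :
    lintegralMatrixCoeffSq μ π ξ (η - η') ≤
      2 * (lintegralMatrixCoeffSq μ π ξ η + lintegralMatrixCoeffSq μ π ξ η') := by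
  simp only [lintegralMatrixCoeffSq, inner_sub_right]
  exact lintegral_enorm_sub_sq_le (aemeasurable_enorm_matrixCoeff_sq μ hπ ξ η) _

theorem lowerSemicontinuous_lintegralMatrixCoeffSq_left (η : H) :
    LowerSemicontinuous (lintegralMatrixCoeffSq μ π · η) :=
  lowerSemicontinuous_lintegral
    (fun g => ((ENNReal.continuous_pow 2).comp
      ((π g).continuous.inner continuous_const).enorm).lowerSemicontinuous)
    (aemeasurable_enorm_matrixCoeff_sq μ hπ · η)

theorem lowerSemicontinuous_lintegralMatrixCoeffSq_right (ξ : H) :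
    LowerSemicontinuous (lintegralMatrixCoeffSq μ π ξ) :=
  lowerSemicontinuous_lintegral
    (fun _ => ((ENNReal.continuous_pow 2).comp
      (continuous_const.inner continuous_id).enorm).lowerSemicontinuous)
    (aemeasurable_enorm_matrixCoeff_sq μ hπ ξ)

end MatrixCoefficient

theorem stmt0_general
    {G : Type*} [Group G] [TopologicalSpace G]
    [MeasurableSpace G] [BorelSpace G]
    (μ : Measure G)
    {H : Type*} [NormedAddCommGroup H] [InnerProductSpace ℂ H] [CompleteSpace H]
    (π : G →* (H ≃ₗᵢ[ℂ] H))
    (hπcont : ∀ ξ : H, Continuous fun g : G => π g ξ) :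
    (∃ C > 0, ∀ ξ η : H, ‖ξ‖ = 1 → ‖η‖ = 1 →
        ∫⁻ g, ENNReal.ofReal (‖(inner ℂ ((π g) ξ) η : ℂ)‖ ^ 2) ∂μ ≤ ENNReal.ofReal C)
      ↔
    (∀ ξ η : H, ∫⁻ g, ENNReal.ofReal (‖(inner ℂ ((π g) ξ) η : ℂ)‖ ^ 2) ∂μ < ⊤) := by
  simp only [ENNReal.ofReal_pow (norm_nonneg _), ofReal_norm]
  change (∃ C > 0, ∀ ξ η : H, ‖ξ‖ = 1 → ‖η‖ = 1 →
      lintegralMatrixCoeffSq μ π ξ η ≤ ENNReal.ofReal C) ↔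
    ∀ ξ η, lintegralMatrixCoeffSq μ π ξ η < ∞
  constructor
  · rintro ⟨C, -, hC⟩ ξ η
    have hunit : ∀ ξ : H, ‖ξ‖ = 1 →
        lintegralMatrixCoeffSq μ π ξ η ≤ ‖η‖ₑ ^ 2 * ENNReal.ofReal C := fun ξ hξ =>
      le_enorm_sq_mul_of_forall_norm_eq_one
        (fun c η => (lintegralMatrixCoeffSq_smul_right μ π c ξ η).le) (hC ξ · hξ) η
    exact (le_enorm_sq_mul_of_forall_norm_eq_one
      (fun c ξ => (lintegralMatrixCoeffSq_smul_left μ π c ξ η).le) hunit ξ).trans_lt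
      (by finiteness)
  · intro hfin
    obtain ⟨C, hC, hbound⟩ := exists_bound_of_separately_lowerSemicontinuous (𝕜 := ℂ)
      (fun ξ η => (hfin ξ η).ne)
      (lowerSemicontinuous_lintegralMatrixCoeffSq_left μ hπcont)
      (lowerSemicontinuous_lintegralMatrixCoeffSq_right μ hπcont)
      (lintegralMatrixCoeffSq_sub_left_le μ hπcont) (lintegralMatrixCoeffSq_sub_right_le μ hπcont)
      (fun c ξ η => (lintegralMatrixCoeffSq_smul_left μ π c ξ η).le)
      (fun c ξ η => (lintegralMatrixCoeffSq_smul_right μ π c ξ η).le)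
    refine ⟨C.toReal + 1, by positivity, fun ξ η hξ hη => (hbound ξ η hξ.le hη.le).trans ?_⟩
    exact (ENNReal.le_ofReal_iff_toReal_le hC.ne (by positivity)).2 (by linarith)

/-- Let `G` be a second countable locally compact group, `μ` a Borel
measure on `G` which is finite on compact subsets, and `π` a strongly continuous unitary
representation of `G` on a complex Hilbert space `H`. Then the following are equivalent:
(i) there is `C > 0` such that `∫_G |⟨π(g)ξ, η⟩|² dμ(g) ≤ C` for all unit vectors `ξ, η`;
(ii) `∫_G |⟨π(g)ξ, η⟩|² dμ(g) < ∞` for all vectors `ξ, η`. -/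
theorem stmt0
    {G : Type*} [Group G] [TopologicalSpace G] [IsTopologicalGroup G]
    [LocallyCompactSpace G] [SecondCountableTopology G]
    [MeasurableSpace G] [BorelSpace G]
    (μ : Measure G) [IsFiniteMeasureOnCompacts μ]
    {H : Type*} [NormedAddCommGroup H] [InnerProductSpace ℂ H] [CompleteSpace H]
    (π : G →* (H ≃ₗᵢ[ℂ] H))
    (hπcont : ∀ ξ : H, Continuous fun g : G => π g ξ) :
    (∃ C > 0, ∀ ξ η : H, ‖ξ‖ = 1 → ‖η‖ = 1 →
        ∫⁻ g, ENNReal.ofReal (‖(inner ℂ ((π g) ξ) η : ℂ)‖ ^ 2) ∂μ ≤ ENNReal.ofReal C)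
      ↔
    (∀ ξ η : H, ∫⁻ g, ENNReal.ofReal (‖(inner ℂ ((π g) ξ) η : ℂ)‖ ^ 2) ∂μ < ⊤) :=
  stmt0_general μ π hπcont
end

section
/- Let G be a second countable locally compact group, let μ be a Borel measure on G which is finite on compact subsets, and let π be a strongly continuous unitary representation of G on a complex Hilbert space H. If for all ξ, η ∈ H one has ∫_G |⟨π(g)ξ, η⟩|² dμ(g) < ∞, then there exists C > 0 such that for all unit vectors ξ, ξ', η, η' ∈ H one has ∫_G |⟨π(g)ξ, ξ'⟩| · |⟨π(g)η, η'⟩| dμ(g) ≤ C. -/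
/-!
The matrix coefficients `(ξ, η) ↦ (g ↦ ⟪π g ξ, η⟫)` form a real-bilinear map `H × H → L²(μ)`.
By Fatou's lemma the `L²` norm of a matrix coefficient is lower semicontinuous in `(ξ, η)`, and it
is finite by hypothesis, so by the Baire category theorem it is bounded on some ball of `H × H`.
Bilinearity moves the bound to a ball around the origin and then, by homogeneity, to
`C ‖ξ‖ ‖η‖` everywhere. The theorem follows from the Cauchy–Schwarz inequality in `L²(μ)`.
-/

open MeasureTheory Topology Set
open scoped ENNReal NNReal

theorem lowerSemicontinuous_eLpNorm {X α V : Type*} [TopologicalSpace X]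
    [FirstCountableTopology X] [MeasurableSpace α] {μ : Measure α} [NormedAddCommGroup V]
    {p : ℝ≥0∞} {f : X → α → V} (hmeas : ∀ x, AEStronglyMeasurable (f x) μ)
    (hcont : ∀ a, Continuous fun x => f x a) :
    LowerSemicontinuous fun x => eLpNorm (f x) p μ := by
  refine lowerSemicontinuous_iff_isClosed_preimage.2 fun C => ?_
  refine closure_subset_iff_isClosed.1 fun x hx => ?_
  have := mem_closure_iff_nhdsWithin_neBot.1 hx
  exact Lp.eLpNorm_le_of_ae_tendsto (u := 𝓝[(fun x => eLpNorm (f x) p μ) ⁻¹' Iic C] x)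
    self_mem_nhdsWithin hmeas
    (.of_forall fun a => ((hcont a).tendsto x).mono_left nhdsWithin_le_nhds)

theorem LowerSemicontinuous.exists_eventually_le_of_ne_top {X : Type*} [TopologicalSpace X]
    [BaireSpace X] [Nonempty X] {f : X → ℝ≥0∞} (hf : LowerSemicontinuous f) (hfin : ∀ x, f x ≠ ∞) :
    ∃ x₀, ∃ C : ℝ≥0, ∀ᶠ x in 𝓝 x₀, f x ≤ C := by
  have hcover : ⋃ n : ℕ, f ⁻¹' Iic ((n : ℝ≥0) : ℝ≥0∞) = univ :=
    eq_univ_of_forall fun x => mem_iUnion.2 <|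
      (ENNReal.exists_nat_gt (hfin x)).imp fun _ hn => by simpa using hn.le
  obtain ⟨n, x₀, hx₀⟩ := nonempty_interior_of_iUnion_of_closed
    (fun n => lowerSemicontinuous_iff_isClosed_preimage.1 hf _) hcover
  exact ⟨x₀, n, mem_interior_iff_mem_nhds.1 hx₀⟩

theorem lintegral_ofReal_norm_mul_norm_le {α E F : Type*} [MeasurableSpace α] {μ : Measure α}
    [NormedAddCommGroup E] [NormedAddCommGroup F] {f : α → E} {g : α → F}
    (hf : AEStronglyMeasurable f μ) (hg : AEStronglyMeasurable g μ) :
    ∫⁻ a, ENNReal.ofReal (‖f a‖ * ‖g a‖) ∂μ ≤ eLpNorm f 2 μ * eLpNorm g 2 μ := by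
  have hHolder := eLpNorm_le_eLpNorm_mul_eLpNorm_of_nnnorm (p := 2) (q := 2) (r := 1) hf hg
    (fun x y => ‖x‖ * ‖y‖) 1 (.of_forall fun a => by simp)
  rw [eLpNorm_one_eq_lintegral_enorm, ENNReal.coe_one, one_mul] at hHolder
  refine le_of_eq_of_le (lintegral_congr fun a => ?_) hHolder
  exact (Real.enorm_eq_ofReal (by positivity)).symm

theorem memLp_two_of_lintegral_ofReal_sq_lt_top {α E : Type*} [MeasurableSpace α]
    {μ : Measure α} [NormedAddCommGroup E] {f : α → E} (hf : AEStronglyMeasurable f μ)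
    (h : ∫⁻ a, ENNReal.ofReal (‖f a‖ ^ 2) ∂μ < ∞) : MemLp f 2 μ :=
  (memLp_two_iff_integrable_sq_norm hf).2
    ⟨hf.norm.pow 2, (hasFiniteIntegral_iff_ofReal (.of_forall fun _ => by positivity)).2 h⟩

section Bilinear

variable {E F V α : Type*} [NormedAddCommGroup E] [NormedSpace ℝ E]
  [NormedAddCommGroup F] [NormedSpace ℝ F] [NormedAddCommGroup V] [NormedSpace ℝ V]
  [MeasurableSpace α] {μ : Measure α} {p : ℝ≥0∞} (B : E →ₗ[ℝ] F →ₗ[ℝ] α → V)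

theorem eLpNorm_bilin_le_of_ball (hp : 1 ≤ p) (hmeas : ∀ x y, AEStronglyMeasurable (B x y) μ)
    {x₀ : E} {y₀ : F} {ε : ℝ} {C : ℝ≥0∞}
    (hC : ∀ z ∈ Metric.ball (x₀, y₀) ε, eLpNorm (B z.1 z.2) p μ ≤ C)
    {u : E} {v : F} (hu : ‖u‖ < ε) (hv : ‖v‖ < ε) :
    eLpNorm (B u v) p μ ≤ 4 * C := by
  have hC' : ∀ s t, ‖s‖ < ε → ‖t‖ < ε → eLpNorm (B (x₀ + s) (y₀ + t)) p μ ≤ C :=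
    fun s t hs ht => hC (x₀ + s, y₀ + t) <| by
      rw [Metric.mem_ball, Prod.dist_eq, dist_eq_norm, dist_eq_norm, add_sub_cancel_left,
        add_sub_cancel_left]
      exact max_lt hs ht
  have hε : 0 < ε := (norm_nonneg u).trans_lt hu
  have h0 : ‖(0 : E)‖ < ε := by rwa [norm_zero]
  have h0' : ‖(0 : F)‖ < ε := by rwa [norm_zero]
  have hdiff : B u v = (B (x₀ + u) (y₀ + v) - B (x₀ + u) (y₀ + 0)) -
      (B (x₀ + 0) (y₀ + v) - B (x₀ + 0) (y₀ + 0)) := by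
    simp only [map_add, LinearMap.add_apply, map_zero, LinearMap.zero_apply]
    abel
  have hsub : ∀ f g : α → V, AEStronglyMeasurable f μ → AEStronglyMeasurable g μ →
      eLpNorm (f - g) p μ ≤ eLpNorm f p μ + eLpNorm g p μ :=
    fun f g hf hg => eLpNorm_sub_le hf hg hp
  rw [hdiff]
  calc _ ≤ (eLpNorm (B (x₀ + u) (y₀ + v)) p μ + eLpNorm (B (x₀ + u) (y₀ + 0)) p μ) +
        (eLpNorm (B (x₀ + 0) (y₀ + v)) p μ + eLpNorm (B (x₀ + 0) (y₀ + 0)) p μ) :=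
        (hsub _ _ ((hmeas _ _).sub (hmeas _ _)) ((hmeas _ _).sub (hmeas _ _))).trans
          (add_le_add (hsub _ _ (hmeas _ _) (hmeas _ _)) (hsub _ _ (hmeas _ _) (hmeas _ _)))
    _ ≤ (C + C) + (C + C) := by
        gcongr
        exacts [hC' _ _ hu hv, hC' _ _ hu h0', hC' _ _ h0 hv, hC' _ _ h0 h0']
    _ = 4 * C := by ring

theorem eLpNorm_bilin_le_of_closedBall {r : ℝ} (hr : 0 < r) {K : ℝ≥0∞}
    (hK : ∀ u v, ‖u‖ ≤ r → ‖v‖ ≤ r → eLpNorm (B u v) p μ ≤ K) (x : E) (y : F) :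
    eLpNorm (B x y) p μ ≤ K * ‖r⁻¹‖ₑ ^ 2 * ‖x‖ₑ * ‖y‖ₑ := by
  rcases eq_or_ne x 0 with rfl | hx
  · simp
  rcases eq_or_ne y 0 with rfl | hy
  · simp
  have hx' : ‖x‖ ≠ 0 := norm_ne_zero_iff.2 hx
  have hy' : ‖y‖ ≠ 0 := norm_ne_zero_iff.2 hy
  set a := r * ‖x‖⁻¹
  set b := r * ‖y‖⁻¹
  have hax : ‖a • x‖ = r := by
    rw [norm_smul, Real.norm_of_nonneg (by positivity), mul_assoc, inv_mul_cancel₀ hx', mul_one]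
  have hby : ‖b • y‖ = r := by
    rw [norm_smul, Real.norm_of_nonneg (by positivity), mul_assoc, inv_mul_cancel₀ hy', mul_one]
  have hscale : B x y = (r⁻¹ ^ 2 * ‖x‖ * ‖y‖) • B (a • x) (b • y) := by
    rw [LinearMap.map_smul₂, map_smul, smul_smul, smul_smul]
    convert (one_smul ℝ (B x y)).symm using 2
    simp only [a, b]
    field_simp
  calc eLpNorm (B x y) p μ = ‖r⁻¹ ^ 2 * ‖x‖ * ‖y‖‖ₑ * eLpNorm (B (a • x) (b • y)) p μ := by
        rw [hscale, eLpNorm_const_smul]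
    _ ≤ ‖r⁻¹ ^ 2 * ‖x‖ * ‖y‖‖ₑ * K := by gcongr; exact hK _ _ hax.le hby.le
    _ = K * ‖r⁻¹‖ₑ ^ 2 * ‖x‖ₑ * ‖y‖ₑ := by
        rw [enorm_mul, enorm_mul, enorm_pow, enorm_norm, enorm_norm]; ring

theorem exists_eLpNorm_bilin_le [CompleteSpace E] [CompleteSpace F] (hp : 1 ≤ p)
    (hmeas : ∀ x y, AEStronglyMeasurable (B x y) μ)
    (hcont : ∀ a, Continuous fun z : E × F => B z.1 z.2 a)
    (hfin : ∀ x y, eLpNorm (B x y) p μ ≠ ∞) :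
    ∃ C : ℝ≥0, ∀ x y, eLpNorm (B x y) p μ ≤ C * ‖x‖ₑ * ‖y‖ₑ := by
  obtain ⟨z₀, C, hC⟩ := (lowerSemicontinuous_eLpNorm (fun z : E × F => hmeas z.1 z.2)
    hcont).exists_eventually_le_of_ne_top fun z => hfin z.1 z.2
  obtain ⟨ε, hε, hball⟩ := Metric.eventually_nhds_iff_ball.1 hC
  have hsmall : ∀ u v, ‖u‖ ≤ ε / 2 → ‖v‖ ≤ ε / 2 → eLpNorm (B u v) p μ ≤ 4 * C :=
    fun u v hu hv => eLpNorm_bilin_le_of_ball B hp hmeas hball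
      (hu.trans_lt (half_lt_self hε)) (hv.trans_lt (half_lt_self hε))
  refine ⟨4 * C * ‖(ε / 2)⁻¹‖₊ ^ 2, fun x y => ?_⟩
  refine (eLpNorm_bilin_le_of_closedBall B (half_pos hε) hsmall x y).trans_eq ?_
  rw [enorm_eq_nnnorm]
  push_cast
  ring

end Bilinear

/-- Only real-bilinear: `⟪π g ξ, η⟫` is conjugate-linear in `ξ`. -/
noncomputable def matrixCoeff {G H : Type*} [Monoid G] [NormedAddCommGroup H]
    [InnerProductSpace ℂ H] (π : G →* (H ≃ₗᵢ[ℂ] H)) : H →ₗ[ℝ] H →ₗ[ℝ] G → ℂ :=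
  LinearMap.mk₂ ℝ (fun ξ η g => inner ℂ (π g ξ) η)
    (fun ξ ξ' η => funext fun g => by simp)
    (fun c ξ η => funext fun g => by
      rw [RCLike.real_smul_eq_coe_smul (K := ℂ), map_smul, inner_smul_real_left]; rfl)
    (fun ξ η η' => funext fun g => by simp)
    (fun c ξ η => funext fun g => by
      rw [RCLike.real_smul_eq_coe_smul (K := ℂ), inner_smul_real_right]; rfl)

theorem stmt1_general
    {G : Type*} [Group G] [TopologicalSpace G]
    [MeasurableSpace G] [BorelSpace G]
    (μ : Measure G)
    {H : Type*} [NormedAddCommGroup H] [InnerProductSpace ℂ H] [CompleteSpace H]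
    (π : G →* (H ≃ₗᵢ[ℂ] H))
    (hπcont : ∀ ξ : H, Continuous fun g : G => π g ξ)
    (hsq : ∀ ξ η : H, ∫⁻ g, ENNReal.ofReal (‖(inner ℂ ((π g) ξ) η : ℂ)‖ ^ 2) ∂μ < ⊤) :
    ∃ C > 0, ∀ ξ ξ' η η' : H, ‖ξ‖ = 1 → ‖ξ'‖ = 1 → ‖η‖ = 1 → ‖η'‖ = 1 →
      ∫⁻ g, ENNReal.ofReal (‖(inner ℂ ((π g) ξ) ξ' : ℂ)‖ * ‖(inner ℂ ((π g) η) η' : ℂ)‖) ∂μ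
        ≤ ENNReal.ofReal C := by
  have hmeas : ∀ ξ η, AEStronglyMeasurable (matrixCoeff π ξ η) μ := fun ξ η =>
    ((hπcont ξ).inner continuous_const).aestronglyMeasurable
  have hcont : ∀ g, Continuous fun z : H × H => matrixCoeff π z.1 z.2 g := fun g =>
    ((π g).continuous.comp continuous_fst).inner continuous_snd
  have hfin : ∀ ξ η, eLpNorm (matrixCoeff π ξ η) 2 μ ≠ ∞ := fun ξ η =>
    (memLp_two_of_lintegral_ofReal_sq_lt_top (hmeas ξ η) (hsq ξ η)).eLpNorm_ne_top
  obtain ⟨C, hC⟩ := exists_eLpNorm_bilin_le (matrixCoeff π) one_le_two hmeas hcont hfin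
  have hunit : ∀ ξ η : H, ‖ξ‖ = 1 → ‖η‖ = 1 → eLpNorm (matrixCoeff π ξ η) 2 μ ≤ C :=
    fun ξ η hξ hη => by simpa [← ofReal_norm, hξ, hη] using hC ξ η
  refine ⟨C * C + 1, by positivity, fun ξ ξ' η η' hξ hξ' hη hη' => ?_⟩
  calc _ ≤ eLpNorm (matrixCoeff π ξ ξ') 2 μ * eLpNorm (matrixCoeff π η η') 2 μ :=
        lintegral_ofReal_norm_mul_norm_le (hmeas ξ ξ') (hmeas η η')
    _ ≤ C * C := mul_le_mul' (hunit ξ ξ' hξ hξ') (hunit η η' hη hη')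
    _ ≤ ENNReal.ofReal (C * C + 1) := by
        rw [← ENNReal.coe_mul, ← ENNReal.ofReal_coe_nnreal, NNReal.coe_mul]
        exact ENNReal.ofReal_le_ofReal (le_add_of_nonneg_right zero_le_one)

/-- Let `G` be a second countable locally compact group, `μ` a Borel measure
on `G` finite on compact subsets, and `π` a strongly continuous unitary representation of `G`
on a complex Hilbert space `H`. If `∫_G |⟨π(g)ξ, η⟩|² dμ(g) < ∞` for all `ξ, η ∈ H`, then
there is `C > 0` such that for all unit vectors `ξ, ξ', η, η'` one has
`∫_G |⟨π(g)ξ, ξ'⟩| · |⟨π(g)η, η'⟩| dμ(g) ≤ C`. -/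
theorem stmt1
    {G : Type*} [Group G] [TopologicalSpace G] [IsTopologicalGroup G]
    [LocallyCompactSpace G] [SecondCountableTopology G]
    [MeasurableSpace G] [BorelSpace G]
    (μ : Measure G) [IsFiniteMeasureOnCompacts μ]
    {H : Type*} [NormedAddCommGroup H] [InnerProductSpace ℂ H] [CompleteSpace H]
    (π : G →* (H ≃ₗᵢ[ℂ] H))
    (hπcont : ∀ ξ : H, Continuous fun g : G => π g ξ)
    (hsq : ∀ ξ η : H, ∫⁻ g, ENNReal.ofReal (‖(inner ℂ ((π g) ξ) η : ℂ)‖ ^ 2) ∂μ < ⊤) :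
    ∃ C > 0, ∀ ξ ξ' η η' : H, ‖ξ‖ = 1 → ‖ξ'‖ = 1 → ‖η‖ = 1 → ‖η'‖ = 1 →
      ∫⁻ g, ENNReal.ofReal (‖(inner ℂ ((π g) ξ) ξ' : ℂ)‖ * ‖(inner ℂ ((π g) η) η' : ℂ)‖) ∂μ
        ≤ ENNReal.ofReal C :=
  stmt1_general μ π hπcont hsq
end

section
/- Let G be a second countable locally compact group with a left Haar measure dg and a length function L. Let (X, m) be a measure space and let π be a strongly continuous unitary representation of G on the complex Hilbert space L²(X, m) which is positive, i.e., for every g ∈ G, π(g) maps the cone of almost everywhere nonnegative functions into itself. Then the following are equivalent: (i) there exists d ≥ 1 such that for all ξ, η ∈ L²(X, m) one has ∫_G |⟨π(g)ξ, η⟩|² (1 + L(g))^{-d} dg < ∞; (ii) there exists d ≥ 1 such that for every almost everywhere nonnegative ξ ∈ L²(X, m) one has ∫_G ⟨π(g)ξ, ξ⟩² (1 + L(g))^{-d} dg < ∞. -/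
/-!
Every `ξ ∈ L²(X, m; ℂ)` is a combination `∑ₖ iᵏ ξₖ` of four a.e. nonnegative functions, namely
`ξₖ = (Re (i⁻ᵏ ξ))⁺`. For a positive operator `T` and nonnegative `p, q` all four terms of
`⟪T(p + q), p + q⟫` are nonnegative reals, so `|⟪T p, q⟫| ≤ ⟪T(p + q), p + q⟫`. Hence
`|⟪π(g)ξ, η⟫|` is bounded by a sum of sixteen diagonal coefficients `⟪π(g)ζ, ζ⟫` at nonnegative
vectors `ζ` independent of `g`, and by Cauchy–Schwarz its square by sixteen times the sum of
their squares. The other implication is `(Re z)² ≤ |z|²`.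
-/

open MeasureTheory
open scoped ComplexOrder

namespace Complex

theorem eq_sum_I_pow_mul_posPart_re (z : ℂ) :
    z = ∑ k : Fin 4, I ^ (k : ℕ) * ((max ((I ^ (k : ℕ))⁻¹ * z).re 0 : ℝ) : ℂ) := by
  simp only [Fin.sum_univ_four]
  apply Complex.ext <;> simp [pow_succ, ← sub_eq_add_neg, max_zero_sub_max_neg_zero_eq_self]

theorem lipschitzWith_posPart_re : LipschitzWith 1 fun z : ℂ => ((max z.re 0 : ℝ) : ℂ) := by
  simpa [Function.comp_def] using
    isometry_ofReal.lipschitz.comp (RCLike.lipschitzWith_re (K := ℂ) |>.max_const 0)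

end Complex

namespace ENNReal

theorem ofReal_div_le_ofReal_div {a b : ℝ} (w : ℝ) (ha : 0 ≤ a) (hab : a ≤ b) :
    ENNReal.ofReal (a / w) ≤ ENNReal.ofReal (b / w) := by
  rcases le_or_gt w 0 with hw | hw
  · rw [ENNReal.ofReal_of_nonpos (div_nonpos_of_nonneg_of_nonpos ha hw)]
    exact zero_le
  · exact ENNReal.ofReal_le_ofReal (div_le_div_of_nonneg_right hab hw.le)

theorem ofReal_sq_div_le_card_mul_sum {ι : Type*} (s : Finset ι) {a w : ℝ} {b : ι → ℝ}
    (hab : |a| ≤ ∑ i ∈ s, b i) :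
    ENNReal.ofReal (a ^ 2 / w) ≤ s.card * ∑ i ∈ s, ENNReal.ofReal (b i ^ 2 / w) := by
  rcases le_or_gt w 0 with hw | hw
  · rw [ENNReal.ofReal_of_nonpos (div_nonpos_of_nonneg_of_nonpos (sq_nonneg a) hw)]
    exact zero_le
  have hsq : a ^ 2 ≤ s.card * ∑ i ∈ s, b i ^ 2 :=
    (sq_le_sq' (by linarith [neg_abs_le a]) (le_of_abs_le hab)).trans sq_sum_le_card_mul_sum_sq
  calc ENNReal.ofReal (a ^ 2 / w) ≤ ENNReal.ofReal (s.card * ∑ i ∈ s, b i ^ 2 / w) := by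
        rw [← Finset.sum_div, ← mul_div_assoc]
        exact ENNReal.ofReal_le_ofReal (div_le_div_of_nonneg_right hsq hw.le)
    _ = s.card * ∑ i ∈ s, ENNReal.ofReal (b i ^ 2 / w) := by
        rw [ENNReal.ofReal_mul (by positivity), ENNReal.ofReal_natCast,
          ENNReal.ofReal_sum_of_nonneg fun i _ => by positivity]

end ENNReal

theorem MeasureTheory.lintegral_ofReal_sq_div_le_card_mul_sum {α ι : Type*} [MeasurableSpace α]
    {μ : Measure α} (s : Finset ι) {f w : α → ℝ} {F : ι → α → ℝ}
    (hF : ∀ i ∈ s, Measurable (F i)) (hw : Measurable w) (hfF : ∀ x, |f x| ≤ ∑ i ∈ s, F i x) :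
    ∫⁻ x, ENNReal.ofReal (f x ^ 2 / w x) ∂μ
      ≤ s.card * ∑ i ∈ s, ∫⁻ x, ENNReal.ofReal (F i x ^ 2 / w x) ∂μ := by
  calc ∫⁻ x, ENNReal.ofReal (f x ^ 2 / w x) ∂μ
      ≤ ∫⁻ x, s.card * ∑ i ∈ s, ENNReal.ofReal (F i x ^ 2 / w x) ∂μ :=
        lintegral_mono fun x => ENNReal.ofReal_sq_div_le_card_mul_sum s (hfF x)
    _ = s.card * ∑ i ∈ s, ∫⁻ x, ENNReal.ofReal (F i x ^ 2 / w x) ∂μ := by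
        rw [lintegral_const_mul' _ _ (ENNReal.natCast_ne_top _),
          lintegral_finsetSum' _ fun i hi => by have := hF i hi; fun_prop]

namespace MeasureTheory.Lp

variable {X : Type*} [MeasurableSpace X] {m : Measure X}

theorem exists_nonneg_eq_sum_I_pow_smul {p : ENNReal} (f : Lp ℂ p m) :
    ∃ P : Fin 4 → Lp ℂ p m, (∀ k, 0 ≤ P k) ∧ f = ∑ k : Fin 4, Complex.I ^ (k : ℕ) • P k := by
  set P : Fin 4 → Lp ℂ p m := fun k =>
    Complex.lipschitzWith_posPart_re.compLp (by simp) ((Complex.I ^ (k : ℕ))⁻¹ • f)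
  have hP : ∀ k, P k =ᵐ[m] fun x => ((max ((Complex.I ^ (k : ℕ))⁻¹ * f x).re 0 : ℝ) : ℂ) := by
    intro k
    filter_upwards [Complex.lipschitzWith_posPart_re.coeFn_compLp (by simp) _,
      Lp.coeFn_smul (Complex.I ^ (k : ℕ))⁻¹ f] with x hx hsmul
    rw [hx, Function.comp_apply, hsmul, Pi.smul_apply, smul_eq_mul]
  refine ⟨P, fun k => (Lp.coeFn_nonneg _).1 ?_, Lp.ext ?_⟩
  · filter_upwards [hP k] with x hx
    rw [hx, Pi.zero_apply]
    exact Complex.zero_le_real.2 (le_max_right _ _)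
  · filter_upwards [Lp.coeFn_fun_finsetSum Finset.univ fun k : Fin 4 => Complex.I ^ (k : ℕ) • P k,
      ae_all_iff.2 hP, ae_all_iff.2 fun k : Fin 4 => Lp.coeFn_smul (Complex.I ^ (k : ℕ)) (P k)]
      with x hsum hPx hsmul
    rw [hsum, Complex.eq_sum_I_pow_mul_posPart_re (f x)]
    simp only [hsmul, Pi.smul_apply, smul_eq_mul, hPx]

theorem inner_nonneg_of_nonneg {f g : Lp ℂ 2 m} (hf : 0 ≤ f) (hg : 0 ≤ g) :
    0 ≤ (inner ℂ f g : ℂ) := by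
  rw [← Lp.coeFn_nonneg] at hf hg
  rw [L2.inner_def]
  refine integral_nonneg_of_ae ?_
  filter_upwards [hf, hg] with x (hfx : 0 ≤ f x) (hgx : 0 ≤ g x)
  rw [Pi.zero_apply, RCLike.inner_apply, starRingEnd_apply, (IsSelfAdjoint.of_nonneg hfx).star_eq]
  exact mul_nonneg hgx hfx

variable {F : Type*} [FunLike F (Lp ℂ 2 m) (Lp ℂ 2 m)] [LinearMapClass F ℂ (Lp ℂ 2 m) (Lp ℂ 2 m)]

theorem norm_inner_apply_le_re_inner_apply_add {T : F} (hT : ∀ f, 0 ≤ f → 0 ≤ T f)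
    {p q : Lp ℂ 2 m} (hp : 0 ≤ p) (hq : 0 ≤ q) :
    ‖(inner ℂ (T p) q : ℂ)‖ ≤ (inner ℂ (T (p + q)) (p + q) : ℂ).re := by
  have hpq : 0 ≤ (inner ℂ (T p) q : ℂ) := inner_nonneg_of_nonneg (hT p hp) hq
  have hle : (inner ℂ (T p) q : ℂ) ≤ inner ℂ (T (p + q)) (p + q) := by
    have hrest := add_nonneg (add_nonneg (inner_nonneg_of_nonneg (hT p hp) hp)
      (inner_nonneg_of_nonneg (hT q hq) hp)) (inner_nonneg_of_nonneg (hT q hq) hq)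
    rw [map_add, inner_add_left, inner_add_right, inner_add_right]
    linear_combination hrest
  calc ‖(inner ℂ (T p) q : ℂ)‖ = (inner ℂ (T p) q : ℂ).re := by
        simpa using congrArg Complex.re (RCLike.norm_of_nonneg' hpq)
    _ ≤ _ := (Complex.le_def.1 hle).1

theorem exists_nonneg_norm_inner_apply_le_sum (ξ η : Lp ℂ 2 m) :
    ∃ ζ : Fin 4 × Fin 4 → Lp ℂ 2 m, (∀ i, 0 ≤ ζ i) ∧
      ∀ T : F, (∀ f, 0 ≤ f → 0 ≤ T f) →
        ‖(inner ℂ (T ξ) η : ℂ)‖ ≤ ∑ i, (inner ℂ (T (ζ i)) (ζ i) : ℂ).re := by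
  obtain ⟨P, hP, rfl⟩ := exists_nonneg_eq_sum_I_pow_smul ξ
  obtain ⟨Q, hQ, rfl⟩ := exists_nonneg_eq_sum_I_pow_smul η
  refine ⟨fun i => P i.1 + Q i.2, fun i => add_nonneg (hP i.1) (hQ i.2), fun T hT => ?_⟩
  rw [map_sum, sum_inner, Fintype.sum_prod_type]
  simp only [inner_sum, map_smul, inner_smul_left, inner_smul_right]
  refine (norm_sum_le _ _).trans (Finset.sum_le_sum fun i _ => ?_)
  refine (norm_sum_le _ _).trans (Finset.sum_le_sum fun j _ => ?_)
  simpa using norm_inner_apply_le_re_inner_apply_add hT (hP i) (hQ j)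

end MeasureTheory.Lp

theorem stmt5_general
    {G : Type*} [Group G] [TopologicalSpace G]
    [MeasurableSpace G] [BorelSpace G]
    (μ : Measure G)
    (L : G → ℝ) (hL_meas : Measurable L)
    {X : Type*} [MeasurableSpace X] (m : Measure X)
    (π : G →* (Lp ℂ 2 m ≃ₗᵢ[ℂ] Lp ℂ 2 m))
    (hπcont : ∀ ξ : Lp ℂ 2 m, Continuous fun g : G => π g ξ)
    (hπpos : ∀ (g : G) (ξ : Lp ℂ 2 m), (∀ᵐ x ∂m, 0 ≤ ξ x) → ∀ᵐ x ∂m, 0 ≤ ((π g) ξ) x) :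
    (∃ d : ℝ, 1 ≤ d ∧ ∀ ξ η : Lp ℂ 2 m,
        ∫⁻ g, ENNReal.ofReal (‖(inner ℂ ((π g) ξ) η : ℂ)‖ ^ 2 / (1 + L g) ^ d) ∂μ < ⊤)
      ↔
    (∃ d : ℝ, 1 ≤ d ∧ ∀ ξ : Lp ℂ 2 m, (∀ᵐ x ∂m, 0 ≤ ξ x) →
        ∫⁻ g, ENNReal.ofReal ((inner ℂ ((π g) ξ) ξ : ℂ).re ^ 2 / (1 + L g) ^ d) ∂μ < ⊤) := by
  refine ⟨fun ⟨d, hd, hfin⟩ => ⟨d, hd, fun ξ _ => ?_⟩,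
    fun ⟨d, hd, hfin⟩ => ⟨d, hd, fun ξ η => ?_⟩⟩
  · refine (lintegral_mono fun g => ?_).trans_lt (hfin ξ ξ)
    exact ENNReal.ofReal_div_le_ofReal_div _ (sq_nonneg _)
      (sq_le_sq' (neg_le_of_abs_le (Complex.abs_re_le_norm _)) (Complex.re_le_norm _))
  · have hπnonneg : ∀ g, ∀ f : Lp ℂ 2 m, 0 ≤ f → 0 ≤ π g f := fun g f hf =>
      (Lp.coeFn_nonneg _).1 (hπpos g f ((Lp.coeFn_nonneg f).2 hf))
    obtain ⟨ζ, hζ, hle⟩ :=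
      Lp.exists_nonneg_norm_inner_apply_le_sum (F := Lp ℂ 2 m ≃ₗᵢ[ℂ] Lp ℂ 2 m) ξ η
    have hcoeff : ∀ i, Measurable fun g => (inner ℂ (π g (ζ i)) (ζ i) : ℂ).re := fun i =>
      (Complex.continuous_re.comp ((hπcont _).inner continuous_const)).measurable
    refine (lintegral_ofReal_sq_div_le_card_mul_sum Finset.univ (fun i _ => hcoeff i)
      ((measurable_const.add hL_meas).pow_const d) fun g => ?_).trans_lt ?_
    · rw [abs_norm]
      exact hle (π g) (hπnonneg g)
    · exact ENNReal.mul_lt_top (ENNReal.natCast_lt_top _)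
        (ENNReal.sum_lt_top.2 fun i _ => hfin _ ((Lp.coeFn_nonneg _).2 (hζ i)))

/-- Let `G` be a second countable locally compact group with a left Haar
measure and a length function `L`, and let `π` be a strongly continuous unitary
representation of `G` on `L²(X, m)` which is positive (it preserves the cone of a.e.
nonnegative functions). Then: there exists `d ≥ 1` such that
`∫_G |⟨π(g)ξ, η⟩|² (1 + L(g))^{-d} dg < ∞` for all `ξ, η`, iff there exists `d ≥ 1` such
that `∫_G ⟨π(g)ξ, ξ⟩² (1 + L(g))^{-d} dg < ∞` for every a.e. nonnegative `ξ`. -/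
theorem stmt5
    {G : Type*} [Group G] [TopologicalSpace G] [IsTopologicalGroup G]
    [LocallyCompactSpace G] [SecondCountableTopology G]
    [MeasurableSpace G] [BorelSpace G]
    (μ : Measure G) [μ.IsHaarMeasure]
    (L : G → ℝ) (hL_meas : Measurable L) (hL_nonneg : ∀ g, 0 ≤ L g)
    (hL_bdd : ∀ Q : Set G, IsCompact Q → BddAbove (L '' Q))
    (hL_one : L 1 = 0) (hL_inv : ∀ g, L g⁻¹ = L g)
    (hL_sub : ∀ g h : G, L (g * h) ≤ L g + L h)
    {X : Type*} [MeasurableSpace X] (m : Measure X)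
    (π : G →* (Lp ℂ 2 m ≃ₗᵢ[ℂ] Lp ℂ 2 m))
    (hπcont : ∀ ξ : Lp ℂ 2 m, Continuous fun g : G => π g ξ)
    (hπpos : ∀ (g : G) (ξ : Lp ℂ 2 m), (∀ᵐ x ∂m, 0 ≤ ξ x) → ∀ᵐ x ∂m, 0 ≤ ((π g) ξ) x) :
    (∃ d : ℝ, 1 ≤ d ∧ ∀ ξ η : Lp ℂ 2 m,
        ∫⁻ g, ENNReal.ofReal (‖(inner ℂ ((π g) ξ) η : ℂ)‖ ^ 2 / (1 + L g) ^ d) ∂μ < ⊤)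
      ↔
    (∃ d : ℝ, 1 ≤ d ∧ ∀ ξ : Lp ℂ 2 m, (∀ᵐ x ∂m, 0 ≤ ξ x) →
        ∫⁻ g, ENNReal.ofReal ((inner ℂ ((π g) ξ) ξ : ℂ).re ^ 2 / (1 + L g) ^ d) ∂μ < ⊤) :=
  stmt5_general μ L hL_meas m π hπcont hπpos
end

section
/- Let G be a locally compact group with a left Haar measure μ and a length function L. Then the following are equivalent: (i) G has polynomial growth with respect to L, i.e., there exist c > 0 and k ∈ ℕ such that μ({ g ∈ G : L(g) ≤ R }) ≤ c·(1 + R)^k for all R > 0; (ii) there exists d > 0 such that ∫_G (1 + L(g))^{-d} dμ(g) < ∞. -/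
/-!
Markov's inequality for the weight `(1 + L)^{-d}` gives
`μ(B_L(R)) ≤ (1 + R)^d ∫ (1 + L)^{-d} dμ`. Conversely, every `g` lies in the ball `B_L(n + 1)`
with `n = ⌊L g⌋`, where the weight is at most `(1 + n)^{-d}`, so the integral is bounded by
`∑ₙ (1 + n)^{-d} μ(B_L(n + 1))`; under growth of degree `k` this series converges for
`d = k + 2`.
-/

open MeasureTheory Set
open scoped ENNReal

section

variable {X : Type*} [MeasurableSpace X] {μ : Measure X} {L : X → ℝ}

theorem antitoneOn_ofReal_one_div_one_add_rpow {d : ℝ} (hd : 0 ≤ d) :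
    AntitoneOn (fun t : ℝ ↦ ENNReal.ofReal (1 / (1 + t) ^ d)) (Ici 0) := by
  intro s (hs : 0 ≤ s) t _ hst
  apply ENNReal.ofReal_le_ofReal
  gcongr

theorem lintegral_comp_le_tsum_mul_measure (hL : Measurable L) (hL0 : ∀ x, 0 ≤ L x)
    {φ : ℝ → ℝ≥0∞} (hφ : AntitoneOn φ (Ici 0)) :
    ∫⁻ x, φ (L x) ∂μ ≤ ∑' n : ℕ, φ n * μ {x | L x ≤ n + 1} := by
  have hball (n : ℕ) : MeasurableSet {x | L x ≤ n + 1} :=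
    measurableSet_le hL measurable_const
  have hpt (x : X) :
      φ (L x) ≤ ∑' n : ℕ, {y | L y ≤ n + 1}.indicator (fun _ ↦ φ n) x := by
    have hmem : x ∈ {y | L y ≤ ⌊L x⌋₊ + 1} := (Nat.lt_floor_add_one (L x)).le
    refine le_trans ?_ (ENNReal.le_tsum ⌊L x⌋₊)
    rw [indicator_of_mem hmem]
    exact hφ (mem_Ici.2 (Nat.cast_nonneg _)) (hL0 x) (Nat.floor_le (hL0 x))
  calc ∫⁻ x, φ (L x) ∂μ
      ≤ ∫⁻ x, ∑' n : ℕ, {y | L y ≤ n + 1}.indicator (fun _ ↦ φ n) x ∂μ :=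
        lintegral_mono hpt
    _ = ∑' n : ℕ, φ n * μ {x | L x ≤ n + 1} := by
      rw [lintegral_tsum fun n ↦ (measurable_const.indicator (hball n)).aemeasurable]
      simp only [lintegral_indicator_const (hball _)]

theorem one_div_pow_add_two_mul_le {x c : ℝ} (hx : 0 ≤ x) (hc : 0 ≤ c) (k : ℕ) :
    1 / (1 + x) ^ (k + 2) * (c * (1 + (x + 1)) ^ k) ≤ c * 2 ^ k * (1 / (x + 1) ^ 2) := by
  have h2x : (1 + (x + 1)) ^ k ≤ 2 ^ k * (1 + x) ^ k := by
    rw [← mul_pow]; gcongr; linarith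
  rw [div_mul_eq_mul_div, one_mul, mul_one_div, div_le_div_iff₀ (by positivity) (by positivity)]
  calc c * (1 + (x + 1)) ^ k * (x + 1) ^ 2
      ≤ c * (2 ^ k * (1 + x) ^ k) * (x + 1) ^ 2 := by gcongr
    _ = c * 2 ^ k * (1 + x) ^ (k + 2) := by ring

theorem lintegral_one_div_one_add_rpow_lt_top_of_measure_le (hL : Measurable L)
    (hL0 : ∀ x, 0 ≤ L x) {c : ℝ} (hc : 0 ≤ c) {k : ℕ}
    (hgrowth : ∀ R > 0, μ {x | L x ≤ R} ≤ ENNReal.ofReal (c * (1 + R) ^ k)) :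
    ∫⁻ x, ENNReal.ofReal (1 / (1 + L x) ^ ((k + 2 : ℕ) : ℝ)) ∂μ < ⊤ := by
  have hsum : Summable fun n : ℕ ↦ c * 2 ^ k * (1 / ((n : ℝ) + 1) ^ 2) := by
    refine Summable.mul_left _ ?_
    exact_mod_cast (summable_nat_add_iff 1).2 (Real.summable_one_div_nat_pow.2 one_lt_two)
  calc ∫⁻ x, ENNReal.ofReal (1 / (1 + L x) ^ ((k + 2 : ℕ) : ℝ)) ∂μ
      ≤ ∑' n : ℕ,
          ENNReal.ofReal (1 / (1 + n) ^ ((k + 2 : ℕ) : ℝ)) * μ {x | L x ≤ n + 1} :=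
        lintegral_comp_le_tsum_mul_measure hL hL0
          (antitoneOn_ofReal_one_div_one_add_rpow (Nat.cast_nonneg _))
    _ ≤ ∑' n : ℕ, ENNReal.ofReal (c * 2 ^ k * (1 / ((n : ℝ) + 1) ^ 2)) := by
        refine ENNReal.tsum_le_tsum fun n ↦ ?_
        rw [Real.rpow_natCast]
        calc _ ≤ ENNReal.ofReal (1 / (1 + n) ^ (k + 2)) *
              ENNReal.ofReal (c * (1 + (n + 1)) ^ k) := by
              gcongr
              exact hgrowth _ (by positivity)
          _ ≤ _ := by
              rw [← ENNReal.ofReal_mul (by positivity)]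
              exact ENNReal.ofReal_le_ofReal (one_div_pow_add_two_mul_le n.cast_nonneg hc k)
    _ < ⊤ := hsum.tsum_ofReal_lt_top

theorem measure_le_rpow_mul_lintegral (hL : Measurable L) (hL0 : ∀ x, 0 ≤ L x) {d : ℝ}
    (hd : 0 ≤ d) {R : ℝ} (hR : 0 ≤ R) :
    μ {x | L x ≤ R} ≤
      ENNReal.ofReal ((1 + R) ^ d) * ∫⁻ x, ENNReal.ofReal (1 / (1 + L x) ^ d) ∂μ := by
  have hpos : 0 < (1 + R) ^ d := by positivity
  have hunit : ENNReal.ofReal ((1 + R) ^ d) * ENNReal.ofReal (1 / (1 + R) ^ d) = 1 := by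
    rw [← ENNReal.ofReal_mul hpos.le, mul_one_div_cancel hpos.ne', ENNReal.ofReal_one]
  have hmarkov : ENNReal.ofReal (1 / (1 + R) ^ d) * μ {x | L x ≤ R} ≤
      ∫⁻ x, ENNReal.ofReal (1 / (1 + L x) ^ d) ∂μ := by
    refine le_trans ?_
      (mul_meas_ge_le_lintegral (by fun_prop) (ENNReal.ofReal (1 / (1 + R) ^ d)))
    refine mul_le_mul_right (measure_mono fun x (hx : L x ≤ R) ↦ ?_) _
    exact antitoneOn_ofReal_one_div_one_add_rpow hd (hL0 x) hR hx
  calc μ {x | L x ≤ R}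
      = ENNReal.ofReal ((1 + R) ^ d) *
          (ENNReal.ofReal (1 / (1 + R) ^ d) * μ {x | L x ≤ R}) := by
        rw [← mul_assoc, hunit, one_mul]
    _ ≤ _ := by gcongr

theorem measure_le_of_lintegral_one_div_one_add_rpow_lt_top (hL : Measurable L)
    (hL0 : ∀ x, 0 ≤ L x) {d : ℝ} (hd : 0 ≤ d)
    (hI : ∫⁻ x, ENNReal.ofReal (1 / (1 + L x) ^ d) ∂μ < ⊤) :
    ∃ c > 0, ∀ R > 0, μ {x | L x ≤ R} ≤ ENNReal.ofReal (c * (1 + R) ^ ⌈d⌉₊) := by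
  set I := ∫⁻ x, ENNReal.ofReal (1 / (1 + L x) ^ d) ∂μ
  refine ⟨I.toReal + 1, by positivity, fun R hR ↦ ?_⟩
  have hRd : (1 + R) ^ d ≤ (1 + R) ^ ⌈d⌉₊ := by
    rw [← Real.rpow_natCast]
    exact Real.rpow_le_rpow_of_exponent_le (by linarith) (Nat.le_ceil d)
  have hI' : I ≤ ENNReal.ofReal (I.toReal + 1) := by
    rw [← ENNReal.ofReal_toReal hI.ne]
    exact ENNReal.ofReal_le_ofReal (by simp)
  calc μ {x | L x ≤ R}
      ≤ ENNReal.ofReal ((1 + R) ^ d) * I := measure_le_rpow_mul_lintegral hL hL0 hd hR.le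
    _ ≤ ENNReal.ofReal ((1 + R) ^ ⌈d⌉₊) * ENNReal.ofReal (I.toReal + 1) := by gcongr
    _ = ENNReal.ofReal ((I.toReal + 1) * (1 + R) ^ ⌈d⌉₊) := by
        rw [← ENNReal.ofReal_mul (by positivity), mul_comm]

end

theorem stmt7_general
    {G : Type*} [MeasurableSpace G]
    (μ : Measure G)
    (L : G → ℝ) (hL_meas : Measurable L) (hL_nonneg : ∀ g, 0 ≤ L g) :
    (∃ c > 0, ∃ k : ℕ, ∀ R > 0, μ {g : G | L g ≤ R} ≤ ENNReal.ofReal (c * (1 + R) ^ k))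
      ↔
    (∃ d : ℝ, 0 < d ∧ ∫⁻ g, ENNReal.ofReal (1 / (1 + L g) ^ d) ∂μ < ⊤) := by
  constructor
  · rintro ⟨c, hc, k, hgrowth⟩
    exact ⟨((k + 2 : ℕ) : ℝ), by positivity,
      lintegral_one_div_one_add_rpow_lt_top_of_measure_le hL_meas hL_nonneg hc.le hgrowth⟩
  · rintro ⟨d, hd, hI⟩
    obtain ⟨c, hc, hgrowth⟩ :=
      measure_le_of_lintegral_one_div_one_add_rpow_lt_top hL_meas hL_nonneg hd.le hI
    exact ⟨c, hc, ⌈d⌉₊, hgrowth⟩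

/-- Let `G` be a locally compact group with a left Haar measure `μ` and a
length function `L`. Then `G` has polynomial growth with respect to `L` (there are `c > 0`
and `k ∈ ℕ` with `μ(B_L(R)) ≤ c·(1 + R)^k` for all `R > 0`) iff there exists `d > 0` with
`∫_G (1 + L(g))^{-d} dμ(g) < ∞`. -/
theorem stmt7
    {G : Type*} [Group G] [TopologicalSpace G] [IsTopologicalGroup G]
    [LocallyCompactSpace G] [MeasurableSpace G] [BorelSpace G]
    (μ : Measure G) [μ.IsHaarMeasure]
    (L : G → ℝ) (hL_meas : Measurable L) (hL_nonneg : ∀ g, 0 ≤ L g)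
    (hL_bdd : ∀ Q : Set G, IsCompact Q → BddAbove (L '' Q))
    (hL_one : L 1 = 0) (hL_inv : ∀ g, L g⁻¹ = L g)
    (hL_sub : ∀ g h : G, L (g * h) ≤ L g + L h) :
    (∃ c > 0, ∃ k : ℕ, ∀ R > 0, μ {g : G | L g ≤ R} ≤ ENNReal.ofReal (c * (1 + R) ^ k))
      ↔
    (∃ d : ℝ, 0 < d ∧ ∫⁻ g, ENNReal.ofReal (1 / (1 + L g) ^ d) ∂μ < ⊤) :=
  stmt7_general μ L hL_meas hL_nonneg
end

section
/- Let G be a locally compact group acting continuously on a compact Hausdorff topological space X, let ν be a finite regular Borel measure on X, and let κ : G × X → (0,∞) be a continuous strictly positive function such that for every g ∈ G the pushforward measure g_*ν has density κ(g, ·) with respect to ν (i.e., g_*ν = κ(g, ·)·ν). Let λ be the Koopman representation of G on L²(X, ν), (λ(g)ξ)(x) = κ(g, x)^{1/2} ξ(g⁻¹·x), and let 1 denote the constant function 1 on X. Let Γ be a discrete subgroup of G and let η ∈ L²(X, ν) be ν-almost everywhere nonnegative. Then the matrix coefficient g ↦ ⟨λ(g)1, η⟩ = ∫_X κ(g, x)^{1/2}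 η(x) dν(x) is stable on G relative to Γ: there exist a relatively compact neighborhood V of the identity and constants C, c > 0 such that c·⟨λ(γ)1, η⟩ ≤ ⟨λ(γg)1, η⟩ ≤ C·⟨λ(γ)1, η⟩ for all g ∈ V and all γ ∈ Γ. -/
/-!
Pushing the Radon–Nikodym identity `g_*ν = κ(g, ·)·ν` through the action and using uniqueness of
densities yields the cocycle identity `κ(γg, x) = κ(γ, x) κ(g, γ⁻¹x)` for `ν`-a.e. `x`. On a
compact neighbourhood `V` of `1`, the continuous positive function `κ` is pinched between two
positive constants `m ≤ κ ≤ M` on `V × X`. Multiplying the square root of the cocycle identity by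
`η ≥ 0` and integrating gives stability with `c = √m` and `C = √M`.
-/

open MeasureTheory
open scoped ENNReal ComplexOrder

theorem MeasurableEquiv.map_withDensity {α β : Type*} [MeasurableSpace α] [MeasurableSpace β]
    (e : α ≃ᵐ β) (μ : Measure α) (f : α → ℝ≥0∞) :
    (μ.withDensity f).map e = (μ.map e).withDensity (f ∘ e.symm) := by
  ext s hs
  rw [e.map_apply, withDensity_apply _ (e.measurable hs), withDensity_apply _ hs, e.restrict_map,
    lintegral_map_equiv]
  simp

theorem IsCompact.exists_pos_bounds {β : Type*} [TopologicalSpace β] {s : Set β} {f : β → ℝ}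
    (hs : IsCompact s) (hf : ContinuousOn f s) (hpos : ∀ b ∈ s, 0 < f b) :
    ∃ m > 0, ∃ M > 0, ∀ b ∈ s, m ≤ f b ∧ f b ≤ M := by
  obtain ⟨m, hm, hm_le⟩ := hs.exists_forall_le' hf hpos
  obtain ⟨M, hM⟩ := hs.bddAbove_image hf
  exact ⟨m, hm, max M 1, by positivity,
    fun b hb => ⟨hm_le b hb, (hM ⟨b, hb, rfl⟩).trans (le_max_left _ _)⟩⟩

section Cocycle

variable {G X : Type*} [Group G] [MulAction G X] [MeasurableSpace X] [MeasurableConstSMul G X]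
  {ν : Measure X} [SigmaFinite ν]

theorem ae_eq_cocycle_of_map_smul_eq_withDensity {ρ : G → X → ℝ≥0∞}
    (hρ : ∀ g, Measurable (ρ g)) (hρν : ∀ g : G, ν.map (g • ·) = ν.withDensity (ρ g))
    (γ g : G) : ρ (γ * g) =ᵐ[ν] fun x => ρ γ x * ρ g (γ⁻¹ • x) := by
  have hρg : Measurable fun x => ρ g (γ⁻¹ • x) := (hρ g).comp (measurable_const_smul _)
  refine (withDensity_eq_iff_of_sigmaFinite (hρ _).aemeasurable
    ((hρ γ).mul hρg).aemeasurable).mp ?_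
  calc ν.withDensity (ρ (γ * g))
      = (ν.map (g • ·)).map (MeasurableEquiv.smul γ) := by
        rw [← hρν, Measure.map_map (MeasurableEquiv.measurable _) (measurable_const_smul g)]
        congr 1 with x
        simp [mul_smul]
    _ = (ν.map (γ • ·)).withDensity fun x => ρ g (γ⁻¹ • x) := by
        rw [hρν, MeasurableEquiv.map_withDensity, MeasurableEquiv.symm_smul]
        rfl
    _ = (ν.withDensity (ρ γ)).withDensity fun x => ρ g (γ⁻¹ • x) := by rw [hρν]
    _ = ν.withDensity fun x => ρ γ x * ρ g (γ⁻¹ • x) := (withDensity_mul ν (hρ γ) hρg).symm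

theorem ae_eq_cocycle_of_map_smul_eq_withDensity_ofReal {κ : G → X → ℝ}
    (hκ : ∀ g, Measurable (κ g)) (hκ_nonneg : ∀ g x, 0 ≤ κ g x)
    (hκν : ∀ g : G, ν.map (g • ·) = ν.withDensity fun x => ENNReal.ofReal (κ g x)) (γ g : G) :
    κ (γ * g) =ᵐ[ν] fun x => κ γ x * κ g (γ⁻¹ • x) := by
  filter_upwards [ae_eq_cocycle_of_map_smul_eq_withDensity (ρ := fun g x => ENNReal.ofReal (κ g x))
    (fun g => ENNReal.measurable_ofReal.comp (hκ g)) hκν γ g] with x hx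
  rwa [← ENNReal.ofReal_mul (hκ_nonneg _ _),
    ENNReal.ofReal_eq_ofReal_iff (hκ_nonneg _ _) (mul_nonneg (hκ_nonneg _ _) (hκ_nonneg _ _))]
    at hx

end Cocycle

section Integral

variable {X : Type*} [MeasurableSpace X] {ν : Measure X} {u v w f : X → ℝ} {c : ℝ}

theorem const_mul_integral_le_integral_of_ae_eq_mul
    (huf : Integrable (fun x => u x * f x) ν) (hvf : Integrable (fun x => v x * f x) ν)
    (hv : v =ᵐ[ν] u * w) (hu : 0 ≤ᵐ[ν] u) (hf : 0 ≤ᵐ[ν] f) (hw : ∀ᵐ x ∂ν, c ≤ w x) :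
    c * ∫ x, u x * f x ∂ν ≤ ∫ x, v x * f x ∂ν := by
  rw [← integral_const_mul]
  refine integral_mono_ae (huf.const_mul c) hvf ?_
  filter_upwards [hv, hu, hf, hw] with x hvx hux hfx hwx
  calc c * (u x * f x) ≤ w x * (u x * f x) := mul_le_mul_of_nonneg_right hwx (mul_nonneg hux hfx)
    _ = v x * f x := by rw [hvx, Pi.mul_apply]; ring

theorem integral_le_const_mul_integral_of_ae_eq_mul
    (huf : Integrable (fun x => u x * f x) ν) (hvf : Integrable (fun x => v x * f x) ν)
    (hv : v =ᵐ[ν] u * w) (hu : 0 ≤ᵐ[ν] u) (hf : 0 ≤ᵐ[ν] f) (hw : ∀ᵐ x ∂ν, w x ≤ c) :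
    ∫ x, v x * f x ∂ν ≤ c * ∫ x, u x * f x ∂ν := by
  rw [← integral_const_mul]
  refine integral_mono_ae hvf (huf.const_mul c) ?_
  filter_upwards [hv, hu, hf, hw] with x hvx hux hfx hwx
  calc v x * f x = w x * (u x * f x) := by rw [hvx, Pi.mul_apply]; ring
    _ ≤ c * (u x * f x) := mul_le_mul_of_nonneg_right hwx (mul_nonneg hux hfx)

end Integral

theorem stmt12_general
    {G : Type*} [Group G] [TopologicalSpace G] [IsTopologicalGroup G]
    [LocallyCompactSpace G]
    {X : Type*} [TopologicalSpace X] [CompactSpace X]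
    [MeasurableSpace X] [BorelSpace X]
    [MulAction G X] [ContinuousSMul G X]
    (ν : Measure X) [IsFiniteMeasure ν]
    (κ : G → X → ℝ) (hκ_cont : Continuous fun p : G × X => κ p.1 p.2)
    (hκ_pos : ∀ g x, 0 < κ g x)
    (hκ_rn : ∀ g : G, ν.map (fun x => g • x)
      = ν.withDensity fun x => ENNReal.ofReal (κ g x))
    (Γ : Subgroup G)
    (η : Lp ℂ 2 ν) (hη : ∀ᵐ x ∂ν, 0 ≤ η x) :
    ∃ V : Set G, V ∈ nhds (1 : G) ∧ IsCompact (closure V) ∧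
      ∃ C > (0 : ℝ), ∃ c > (0 : ℝ), ∀ g ∈ V, ∀ γ : Γ,
        c * (∫ x, Real.sqrt (κ (γ : G) x) * (η x).re ∂ν)
            ≤ (∫ x, Real.sqrt (κ ((γ : G) * g) x) * (η x).re ∂ν) ∧
        (∫ x, Real.sqrt (κ ((γ : G) * g) x) * (η x).re ∂ν)
            ≤ C * (∫ x, Real.sqrt (κ (γ : G) x) * (η x).re ∂ν) := by
  have hκ_slice : ∀ g, Continuous (κ g) := fun g => hκ_cont.comp (Continuous.prodMk_right g)
  have hη_int : Integrable (fun x => (η x).re) ν := ((Lp.memLp η).integrable one_le_two).re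
  have hη_nonneg : 0 ≤ᵐ[ν] fun x => (η x).re := hη.mono fun x hx => (Complex.nonneg_iff.mp hx).1
  have hint : ∀ h : G, Integrable (fun x => √(κ h x) * (η x).re) ν := fun h =>
    integrableOn_univ.mp <| IntegrableOn.continuousOn_mul_of_subset (hκ_slice h).sqrt.continuousOn
      hη_int.integrableOn isCompact_univ MeasurableSet.univ subset_rfl
  obtain ⟨V, hV1, hVc, hVcl⟩ := exists_mem_nhds_isCompact_isClosed (1 : G)
  obtain ⟨m, hm, M, hM, hκ_bounds⟩ := (hVc.prod isCompact_univ).exists_pos_bounds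
    hκ_cont.continuousOn fun p _ => hκ_pos p.1 p.2
  refine ⟨V, hV1, by rwa [hVcl.closure_eq], √M, by positivity, √m, by positivity,
    fun g hg γ => ?_⟩
  have hcocycle : (fun x => √(κ (γ * g) x)) =ᵐ[ν]
      (fun x => √(κ γ x)) * fun x => √(κ g ((γ : G)⁻¹ • x)) := by
    filter_upwards [ae_eq_cocycle_of_map_smul_eq_withDensity_ofReal
      (fun g => (hκ_slice g).measurable) (fun g x => (hκ_pos g x).le) hκ_rn γ g] with x hx
    rw [hx, Real.sqrt_mul (hκ_pos _ _).le, Pi.mul_apply]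
  have hbounds x := hκ_bounds (g, (γ : G)⁻¹ • x) ⟨hg, trivial⟩
  have hsqrt_nonneg : 0 ≤ᵐ[ν] fun x => √(κ γ x) := ae_of_all _ fun x => Real.sqrt_nonneg _
  exact ⟨const_mul_integral_le_integral_of_ae_eq_mul (hint γ) (hint _) hcocycle hsqrt_nonneg
      hη_nonneg (ae_of_all _ fun x => Real.sqrt_le_sqrt (hbounds x).1),
    integral_le_const_mul_integral_of_ae_eq_mul (hint γ) (hint _) hcocycle hsqrt_nonneg
      hη_nonneg (ae_of_all _ fun x => Real.sqrt_le_sqrt (hbounds x).2)⟩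

/-- Let `G` be a locally compact group acting continuously on a compact
Hausdorff space `X`, `ν` a finite regular Borel measure on `X`, and
`κ : G × X → (0, ∞)` a continuous strictly positive cocycle with `g_*ν = κ(g, ·)·ν`.
For a discrete subgroup `Γ` of `G` and a `ν`-a.e. nonnegative `η ∈ L²(X, ν)`, the matrix
coefficient `g ↦ ⟨λ(g)1, η⟩ = ∫_X κ(g, x)^{1/2} η(x) dν(x)` of the associated Koopman
representation is stable on `G` relative to `Γ`. -/
theorem stmt12
    {G : Type*} [Group G] [TopologicalSpace G] [IsTopologicalGroup G]
    [LocallyCompactSpace G] [MeasurableSpace G] [BorelSpace G]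
    {X : Type*} [TopologicalSpace X] [CompactSpace X] [T2Space X]
    [MeasurableSpace X] [BorelSpace X]
    [MulAction G X] [ContinuousSMul G X]
    (ν : Measure X) [IsFiniteMeasure ν] [ν.Regular]
    (κ : G → X → ℝ) (hκ_cont : Continuous fun p : G × X => κ p.1 p.2)
    (hκ_pos : ∀ g x, 0 < κ g x)
    (hκ_rn : ∀ g : G, ν.map (fun x => g • x)
      = ν.withDensity fun x => ENNReal.ofReal (κ g x))
    (Γ : Subgroup G) (hΓ : DiscreteTopology Γ)
    (η : Lp ℂ 2 ν) (hη : ∀ᵐ x ∂ν, 0 ≤ η x) :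
    ∃ V : Set G, V ∈ nhds (1 : G) ∧ IsCompact (closure V) ∧
      ∃ C > (0 : ℝ), ∃ c > (0 : ℝ), ∀ g ∈ V, ∀ γ : Γ,
        c * (∫ x, Real.sqrt (κ (γ : G) x) * (η x).re ∂ν)
            ≤ (∫ x, Real.sqrt (κ ((γ : G) * g) x) * (η x).re ∂ν) ∧
        (∫ x, Real.sqrt (κ ((γ : G) * g) x) * (η x).re ∂ν)
            ≤ C * (∫ x, Real.sqrt (κ (γ : G) x) * (η x).re ∂ν) :=
  stmt12_general ν κ hκ_cont hκ_pos hκ_rn Γ η hη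
end

section
/- Let Γ be a countable discrete group acting measurably on a σ-finite measure space (X, m) by measurable bijections such that each pushforward γ_*m is equivalent to m, and let π_α be the associated Koopman representation of Γ on L²(X, m). Consider the Maharam extension: the measure-preserving action of Γ on (X × ℝ, m ⊗ e^{-t}dt) given by γ·(x, t) = (γ·x, t + log(d(γ⁻¹_*m)/dm (x))). Assume that the Maharam extension is ergodic (every measurable A ⊆ X × ℝ invariant up to null sets under every γ ∈ Γ is null or conull for m ⊗ e^{-t}dt) and that m is not Γ-invariant (there exists γ ∈ Γ with γ_*m ≠ m). Then π_α has no nonzero invariant vector: if ξ ∈ L²(X, m) satisfies π_α(γ)ξ = ξ for every γ ∈ Γ, then ξ = 0 in L²(X, m). -/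
open MeasureTheory
open scoped ComplexOrder

/-- Let `Γ` be a countable discrete group acting measurably and
quasi-invariantly on a σ-finite measure space `(X, m)` with Koopman representation `π` on
`L²(X, m)`. If the Maharam extension (the measure-preserving action of `Γ` on
`(X × ℝ, m ⊗ e^{-t}dt)` given by `γ·(x, t) = (γ·x, t + log(d(γ⁻¹_*m)/dm(x)))`) is ergodic
and `m` is not `Γ`-invariant, then `π` has no nonzero invariant vector. -/
theorem stmt15
    {Γ : Type*} [Group Γ] [Countable Γ]
    {X : Type*} [MeasurableSpace X] (m : Measure X) [SigmaFinite m]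
    (α : Γ →* Equiv.Perm X) (hα_meas : ∀ γ, Measurable (α γ))
    (hα_qi : ∀ γ, m.map (α γ) ≪ m ∧ m ≪ m.map (α γ))
    (π : Γ →* (Lp ℂ 2 m ≃ₗᵢ[ℂ] Lp ℂ 2 m))
    (hπ : ∀ (γ : Γ) (ξ : Lp ℂ 2 m), ∀ᵐ x ∂m,
      ((π γ) ξ) x = (Real.sqrt ((Measure.rnDeriv (m.map (α γ)) m x).toReal) : ℂ)
        * ξ ((α γ)⁻¹ x))
    (herg : ∀ A : Set (X × ℝ), MeasurableSet A →
      (∀ γ : Γ,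
        (m.prod (volume.withDensity fun t => ENNReal.ofReal (Real.exp (-t))))
          (symmDiff
            ((fun p : X × ℝ =>
              ((α γ) p.1,
                p.2 + Real.log ((Measure.rnDeriv (m.map (α γ⁻¹)) m p.1).toReal))) ⁻¹' A)
            A) = 0) →
      (m.prod (volume.withDensity fun t => ENNReal.ofReal (Real.exp (-t)))) A = 0 ∨
      (m.prod (volume.withDensity fun t => ENNReal.ofReal (Real.exp (-t)))) Aᶜ = 0)
    (hnoninv : ∃ γ : Γ, m.map (α γ) ≠ m) :
    ∀ ξ : Lp ℂ 2 m, (∀ γ : Γ, (π γ) ξ = ξ) → ξ = 0 := by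
  classical
  intro ξ hξ
  set ν : Measure ℝ := volume.withDensity fun t => ENNReal.ofReal (Real.exp (-t)) with hνdef
  have hνac : (volume : Measure ℝ) ≪ ν := by
    refine withDensity_absolutelyContinuous'
      ((ENNReal.measurable_ofReal.comp (Real.measurable_exp.comp measurable_neg)).aemeasurable)
      (Filter.Eventually.of_forall fun t => ?_)
    exact ne_of_gt (ENNReal.ofReal_pos.mpr (Real.exp_pos _))
  have hIoi : ∀ (a : ℝ) (s : Set ℝ), Set.Ioi a ⊆ s → ν s ≠ 0 := by
    intro a s hsub h0
    have h1 : ν (Set.Ioi a) = 0 := measure_mono_null hsub h0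
    have h2 : (volume : Measure ℝ) (Set.Ioi a) = 0 := hνac h1
    rw [Real.volume_Ioi] at h2
    exact ENNReal.top_ne_zero h2
  have hIio : ∀ (a : ℝ) (s : Set ℝ), Set.Iio a ⊆ s → ν s ≠ 0 := by
    intro a s hsub h0
    have h1 : ν (Set.Iio a) = 0 := measure_mono_null hsub h0
    have h2 : (volume : Measure ℝ) (Set.Iio a) = 0 := hνac h1
    rw [Real.volume_Iio] at h2
    exact ENNReal.top_ne_zero h2
  have hfs := Lp.aestronglyMeasurable ξ
  set f : X → ℂ := hfs.mk ξ with hfdef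
  have hfm : Measurable f := hfs.stronglyMeasurable_mk.measurable
  have hfe : (ξ : X → ℂ) =ᵐ[m] f := hfs.ae_eq_mk
  set A : Set (X × ℝ) := {p | 1 < Real.exp p.2 * ‖f p.1‖ ^ 2} with hAdef
  have hAmeas : MeasurableSet A :=
    measurableSet_lt measurable_const
      ((Real.measurable_exp.comp measurable_snd).mul
        (((hfm.comp measurable_fst).norm).pow_const 2))
  have hinv : ∀ γ : Γ,
      (m.prod ν)
        (symmDiff
          ((fun p : X × ℝ =>
            ((α γ) p.1,
              p.2 + Real.log ((Measure.rnDeriv (m.map (α γ⁻¹)) m p.1).toReal))) ⁻¹' A)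
          A) = 0 := by
    intro γ
    set R : X → ENNReal := Measure.rnDeriv (m.map (α γ⁻¹)) m with hRdef
    have hsymm : (⇑(α γ⁻¹ : Equiv.Perm X).symm : X → X) = ⇑(α γ : Equiv.Perm X) := by
      funext x
      rw [map_inv]
      rfl
    haveI hSF : SigmaFinite (m.map (α γ⁻¹)) := by
      let e : X ≃ᵐ X :=
        { toEquiv := (α γ⁻¹ : Equiv.Perm X)
          measurable_toFun := hα_meas γ⁻¹
          measurable_invFun := hsymm ▸ hα_meas γ }
      have he : m.map (α γ⁻¹) = m.map e := rfl
      rw [he]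
      exact e.sigmaFinite_map
    have hpos : ∀ᵐ x ∂m, 0 < R x :=
      (Measure.rnDeriv_pos (hα_qi γ⁻¹).1).filter_mono (hα_qi γ⁻¹).2.ae_le
    have hfin : ∀ᵐ x ∂m, R x < ⊤ := Measure.rnDeriv_lt_top _ _
    have hperm : ((α γ⁻¹ : Equiv.Perm X)⁻¹) = (α γ : Equiv.Perm X) := by
      rw [map_inv, inv_inv]
    have heq0 : ∀ᵐ x ∂m,
        (ξ : X → ℂ) x = (Real.sqrt ((R x).toReal) : ℂ) * ξ ((α γ) x) := by
      have h := hπ γ⁻¹ ξ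
      rw [hξ γ⁻¹] at h
      simpa only [hperm, hRdef] using h
    have hqmp : Measure.QuasiMeasurePreserving (⇑(α γ)) m m := ⟨hα_meas γ, (hα_qi γ).1⟩
    have hcomp : (fun x => (ξ : X → ℂ) ((α γ) x)) =ᵐ[m] fun x => f ((α γ) x) :=
      hqmp.ae_eq_comp hfe
    have hgood : ∀ᵐ x ∂m, ∀ t : ℝ,
        (((α γ) x, t + Real.log ((R x).toReal)) ∈ A ↔ (x, t) ∈ A) := by
      filter_upwards [hpos, hfin, heq0, hfe, hcomp] with x h1 h2 h3 h4 h5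
      intro t
      have hr : 0 < (R x).toReal := ENNReal.toReal_pos h1.ne' h2.ne
      have hfx : f x = (Real.sqrt ((R x).toReal) : ℂ) * f ((α γ) x) := by
        rw [← h4, ← h5]; exact h3
      have hn : ‖f x‖ ^ 2 = (R x).toReal * ‖f ((α γ) x)‖ ^ 2 := by
        rw [hfx, norm_mul, mul_pow, Complex.norm_real, Real.norm_eq_abs,
          abs_of_nonneg (Real.sqrt_nonneg _), Real.sq_sqrt ENNReal.toReal_nonneg]
      simp only [hAdef, Set.mem_setOf_eq]
      rw [Real.exp_add, Real.exp_log hr, mul_assoc, ← hn]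
    rw [ae_iff] at hgood
    obtain ⟨N, hNsub, hNmeas, hNnull⟩ := exists_measurable_superset_of_null hgood
    have hsub :
        symmDiff
          ((fun p : X × ℝ =>
            ((α γ) p.1,
              p.2 + Real.log ((Measure.rnDeriv (m.map (α γ⁻¹)) m p.1).toReal))) ⁻¹' A)
          A ⊆ N ×ˢ (Set.univ : Set ℝ) := by
      rintro ⟨x, t⟩ hp
      refine ⟨?_, trivial⟩
      by_contra hx
      have hP : ∀ t : ℝ, (((α γ) x, t + Real.log ((R x).toReal)) ∈ A ↔ (x, t) ∈ A) :=
        of_not_not fun hPn => hx (hNsub hPn)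
      rcases Set.mem_symmDiff.1 hp with ⟨h₁, h₂⟩ | ⟨h₁, h₂⟩
      · exact h₂ ((hP t).1 h₁)
      · exact h₂ ((hP t).2 h₁)
    refine measure_mono_null hsub ?_
    rw [Measure.prod_prod, hNnull, zero_mul]
  rcases herg A hAmeas hinv with h0 | h1
  · have hsec := (Measure.measure_prod_null hAmeas).1 h0
    have hfz : (ξ : X → ℂ) =ᵐ[m] 0 := by
      filter_upwards [hsec, hfe] with x hx hxe
      simp only [Pi.zero_apply]
      rw [hxe]
      by_contra hne
      have hpos : 0 < ‖f x‖ ^ 2 := pow_pos (norm_pos_iff.2 hne) 2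
      refine hIoi (-Real.log (‖f x‖ ^ 2)) (Prod.mk x ⁻¹' A) ?_ hx
      intro t ht
      simp only [Set.mem_preimage, hAdef, Set.mem_setOf_eq]
      have h1 : Real.exp (-Real.log (‖f x‖ ^ 2)) < Real.exp t := Real.exp_lt_exp.2 ht
      rw [Real.exp_neg, Real.exp_log hpos] at h1
      calc (1 : ℝ) = (‖f x‖ ^ 2)⁻¹ * ‖f x‖ ^ 2 := (inv_mul_cancel₀ hpos.ne').symm
        _ < Real.exp t * ‖f x‖ ^ 2 := mul_lt_mul_of_pos_right h1 hpos
    exact Lp.eq_zero_iff_ae_eq_zero.2 hfz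
  · have hsec := (Measure.measure_prod_null hAmeas.compl).1 h1
    have hF : ∀ᵐ x ∂m, False := by
      filter_upwards [hsec] with x hx
      refine hIio (-Real.log (‖f x‖ ^ 2 + 1)) (Prod.mk x ⁻¹' Aᶜ) ?_ hx
      intro t ht
      simp only [Set.mem_preimage, Set.mem_compl_iff, hAdef, Set.mem_setOf_eq, not_lt]
      have hc : (0 : ℝ) ≤ ‖f x‖ ^ 2 := by positivity
      have h1c : (0 : ℝ) < ‖f x‖ ^ 2 + 1 := by positivity
      have h1 : Real.exp t < Real.exp (-Real.log (‖f x‖ ^ 2 + 1)) := Real.exp_lt_exp.2 ht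
      rw [Real.exp_neg, Real.exp_log h1c] at h1
      have h2 : Real.exp t * (‖f x‖ ^ 2 + 1) < (‖f x‖ ^ 2 + 1)⁻¹ * (‖f x‖ ^ 2 + 1) :=
        mul_lt_mul_of_pos_right h1 h1c
      rw [inv_mul_cancel₀ h1c.ne'] at h2
      nlinarith [Real.exp_pos t]
    have hfz : (ξ : X → ℂ) =ᵐ[m] 0 := by
      filter_upwards [hF] with x hx
      exact hx.elim
    exact Lp.eq_zero_iff_ae_eq_zero.2 hfz
end
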